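/- arXiv:2508.07208 — 3 statements merged into one kernel-verified Lean document; each statement's English description precedes it below -/
import Mathlib

section
/- Normalized triadic encodings of distinct contexts are separated by a margin of at least 3^{-k}: if k ≥ 1 and a, b : Fin k → Fin S are contexts with a ≠ b, then ‖ v(a)/‖v(a)‖ − v(b)/‖v(b)‖ ‖₂ ≥ 3^{-k}, where v(a) = Σ_{j=0}^{k-1} 3^j · e_{a(j)} ∈ ℝ^S and ‖·‖ denotes the Euclidean norm (note v(a) ≠ 0 since its coordinates are nonnegative with positive sum). -/
open Finset

private lemma tri_coord_le_norm {S : ℕ} (x : EuclideanSpace ℝ (Fin S)) (s : Fin S) :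
    |x s| ≤ ‖x‖ := by
  have h := abs_real_inner_le_norm (EuclideanSpace.single s (1:ℝ)) x
  rw [EuclideanSpace.inner_single_left, EuclideanSpace.norm_single] at h
  simpa using h

private lemma tri_coord_eq {S k : ℕ} (c : Fin k → Fin S) (s : Fin S) :
    (∑ j : Fin k, (3 : ℝ) ^ (j : ℕ) •
      (EuclideanSpace.single (c j) (1 : ℝ) : EuclideanSpace ℝ (Fin S))) s
    = ∑ j : Fin k, (if c j = s then (3:ℝ)^(j:ℕ) else 0) := by
  classical
  have := map_sum ((PiLp.projₗ 2 (fun _ : Fin S => ℝ) s : EuclideanSpace ℝ (Fin S) →ₗ[ℝ] ℝ))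
    (fun j : Fin k => (3 : ℝ) ^ (j : ℕ) •
      (EuclideanSpace.single (c j) (1 : ℝ) : EuclideanSpace ℝ (Fin S))) Finset.univ
  simp only [PiLp.projₗ] at this
  rw [show (∑ j : Fin k, (3 : ℝ) ^ (j : ℕ) •
      (EuclideanSpace.single (c j) (1 : ℝ) : EuclideanSpace ℝ (Fin S))) s
    = ∑ j : Fin k, ((3 : ℝ) ^ (j : ℕ) •
      (EuclideanSpace.single (c j) (1 : ℝ) : EuclideanSpace ℝ (Fin S))) s from this]
  congr 1; ext j
  rw [PiLp.smul_apply, EuclideanSpace.single_apply]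
  simp [eq_comm, mul_ite]

private lemma tri_geom (m : ℕ) : ∑ i ∈ Finset.range m, (3:ℝ)^i = ((3:ℝ)^m - 1)/2 := by
  rw [geom_sum_eq (by norm_num : (3:ℝ) ≠ 1)]
  norm_num

private lemma tri_sum_nonneg {S k : ℕ} (c : Fin k → Fin S) (s : Fin S) :
    0 ≤ ∑ j : Fin k, (if c j = s then (3:ℝ)^(j:ℕ) else 0) := by
  apply Finset.sum_nonneg
  intro j _
  split <;> positivity

private lemma tri_key {S k : ℕ} (c d : Fin k → Fin S) (j0 : Fin k)
    (hgt : ∀ j, j0 < j → c j = d j) (hne : d j0 ≠ c j0) :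
    1 ≤ (∑ j : Fin k, (if c j = c j0 then (3:ℝ)^(j:ℕ) else 0))
      - (∑ j : Fin k, (if d j = c j0 then (3:ℝ)^(j:ℕ) else 0)) := by
  classical
  set s := c j0 with hs
  rw [← Finset.sum_sub_distrib]
  set g : Fin k → ℝ := fun j =>
    (if c j = s then (3:ℝ)^(j:ℕ) else 0) - (if d j = s then (3:ℝ)^(j:ℕ) else 0) with hg
  have h1 : ∑ j : Fin k, g j = g j0 + ∑ j ∈ Finset.univ.erase j0, g j :=
    (Finset.add_sum_erase Finset.univ g (Finset.mem_univ j0)).symm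
  have hgj0 : g j0 = (3:ℝ)^(j0:ℕ) := by simp [hg, hs, hne]; exact hne
  have h2 : ∀ j ∈ Finset.univ.erase j0,
      -(if (j:ℕ) < (j0:ℕ) then (3:ℝ)^(j:ℕ) else 0) ≤ g j := by
    intro j hj
    have hjne : j ≠ j0 := (Finset.mem_erase.mp hj).1
    rcases lt_trichotomy j j0 with hlt | heq | hgt'
    · rw [if_pos (show (j:ℕ) < (j0:ℕ) from hlt)]
      have hc : (0:ℝ) ≤ if c j = s then (3:ℝ)^(j:ℕ) else 0 := by split <;> positivity
      have hd : (if d j = s then (3:ℝ)^(j:ℕ) else 0) ≤ (3:ℝ)^(j:ℕ) := by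
        split
        · exact le_refl _
        · positivity
      simp only [hg]
      linarith
    · exact absurd heq hjne
    · have hcd : c j = d j := hgt j hgt'
      have : ¬ ((j:ℕ) < (j0:ℕ)) := not_lt.mpr (le_of_lt hgt')
      rw [if_neg this, hg]
      simp [hcd]
  have h3 : ∑ j ∈ Finset.univ.erase j0, -(if (j:ℕ) < (j0:ℕ) then (3:ℝ)^(j:ℕ) else 0)
      ≤ ∑ j ∈ Finset.univ.erase j0, g j := Finset.sum_le_sum h2
  have h4 : ∑ j ∈ Finset.univ.erase j0, -(if (j:ℕ) < (j0:ℕ) then (3:ℝ)^(j:ℕ) else 0)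
      = -∑ j ∈ Finset.univ.erase j0, (if (j:ℕ) < (j0:ℕ) then (3:ℝ)^(j:ℕ) else 0) := by
    rw [Finset.sum_neg_distrib]
  have h5 : ∑ j ∈ Finset.univ.erase j0, (if (j:ℕ) < (j0:ℕ) then (3:ℝ)^(j:ℕ) else 0)
      ≤ ∑ j : Fin k, (if (j:ℕ) < (j0:ℕ) then (3:ℝ)^(j:ℕ) else 0) := by
    apply Finset.sum_le_sum_of_subset_of_nonneg (Finset.erase_subset _ _)
    intro j _ _; split <;> positivity
  have h6 : ∑ j : Fin k, (if (j:ℕ) < (j0:ℕ) then (3:ℝ)^(j:ℕ) else 0)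
      = ((3:ℝ)^(j0:ℕ) - 1)/2 := by
    rw [Fin.sum_univ_eq_sum_range (fun i => if i < (j0:ℕ) then (3:ℝ)^i else 0) k,
        ← tri_geom (j0:ℕ),
        ← Finset.sum_subset (Finset.range_subset_range.mpr (le_of_lt j0.2))
          (fun i _ hi => if_neg (by simpa using hi))]
    exact Finset.sum_congr rfl fun i hi => if_pos (Finset.mem_range.mp hi)
  have hp : (1:ℝ) ≤ (3:ℝ)^(j0:ℕ) := one_le_pow₀ (by norm_num)
  rw [h1, hgj0]
  have := le_trans (h4 ▸ (neg_le_neg (h6 ▸ h5))) h3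
  linarith

/-- Normalized triadic encodings of distinct contexts are separated by a margin
of at least `3⁻ᵏ`: if `k ≥ 1` and `a ≠ b`, then
`‖ v(a)/‖v(a)‖ − v(b)/‖v(b)‖ ‖ ≥ 3⁻ᵏ` where `v(a) = Σ_j 3^j • e_{a j} ∈ ℝ^S`. -/
theorem triadic_encoding_margin (S k : ℕ) (hk : 1 ≤ k) (a b : Fin k → Fin S)
    (hab : a ≠ b)
    (va vb : EuclideanSpace ℝ (Fin S))
    (hva : va = ∑ j : Fin k, (3 : ℝ) ^ (j : ℕ) •
          (EuclideanSpace.single (a j) (1 : ℝ) : EuclideanSpace ℝ (Fin S)))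
    (hvb : vb = ∑ j : Fin k, (3 : ℝ) ^ (j : ℕ) •
          (EuclideanSpace.single (b j) (1 : ℝ) : EuclideanSpace ℝ (Fin S))) :
    ‖(‖va‖⁻¹ • va) - (‖vb‖⁻¹ • vb)‖ ≥ ((3 : ℝ) ^ k)⁻¹ := by
  classical
  -- coordinates
  have hca : ∀ s, va s = ∑ j : Fin k, (if a j = s then (3:ℝ)^(j:ℕ) else 0) := by
    intro s; rw [hva]; exact tri_coord_eq a s
  have hcb : ∀ s, vb s = ∑ j : Fin k, (if b j = s then (3:ℝ)^(j:ℕ) else 0) := by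
    intro s; rw [hvb]; exact tri_coord_eq b s
  -- norms positive
  have hj00 : (⟨0, hk⟩ : Fin k) = ⟨0, hk⟩ := rfl
  have hva1 : (1:ℝ) ≤ va (a ⟨0, hk⟩) := by
    rw [hca]
    have := Finset.single_le_sum
      (f := fun j : Fin k => if a j = a ⟨0, hk⟩ then (3:ℝ)^(j:ℕ) else 0)
      (fun j _ => by split <;> positivity) (Finset.mem_univ (⟨0, hk⟩ : Fin k))
    simpa using this
  have hvb1 : (1:ℝ) ≤ vb (b ⟨0, hk⟩) := by
    rw [hcb]
    have := Finset.single_le_sum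
      (f := fun j : Fin k => if b j = b ⟨0, hk⟩ then (3:ℝ)^(j:ℕ) else 0)
      (fun j _ => by split <;> positivity) (Finset.mem_univ (⟨0, hk⟩ : Fin k))
    simpa using this
  have hNa : 0 < ‖va‖ := by
    have : va ≠ 0 := by
      intro h; rw [h] at hva1; simp at hva1; linarith
    exact norm_pos_iff.mpr this
  have hNb : 0 < ‖vb‖ := by
    have : vb ≠ 0 := by
      intro h; rw [h] at hvb1; simp at hvb1; linarith
    exact norm_pos_iff.mpr this
  -- norm upper bound
  have hNaU : ‖va‖ ≤ ((3:ℝ)^k - 1)/2 := by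
    rw [hva]
    calc ‖∑ j : Fin k, (3 : ℝ) ^ (j : ℕ) •
          (EuclideanSpace.single (a j) (1 : ℝ) : EuclideanSpace ℝ (Fin S))‖
        ≤ ∑ j : Fin k, ‖(3 : ℝ) ^ (j : ℕ) •
          (EuclideanSpace.single (a j) (1 : ℝ) : EuclideanSpace ℝ (Fin S))‖ :=
          norm_sum_le _ _
      _ = ∑ j : Fin k, (3:ℝ)^(j:ℕ) := by
          apply Finset.sum_congr rfl
          intro j _
          rw [norm_smul, EuclideanSpace.norm_single]
          simp [abs_of_nonneg (by positivity : (0:ℝ) ≤ (3:ℝ)^(j:ℕ))]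
      _ = ((3:ℝ)^k - 1)/2 := by
          rw [Fin.sum_univ_eq_sum_range (fun i => (3:ℝ)^i) k, tri_geom]
  -- max disagreement index
  have hD : (Finset.univ.filter fun j : Fin k => a j ≠ b j).Nonempty := by
    rcases Function.ne_iff.mp hab with ⟨j, hj⟩
    exact ⟨j, by simp [hj]⟩
  set j0 := Finset.max' _ hD with hj0def
  have hj0 : a j0 ≠ b j0 := by
    have := Finset.max'_mem _ hD
    simpa using this
  have hgt : ∀ j, j0 < j → a j = b j := by
    intro j hj
    by_contra hne
    exact absurd hj (not_lt.mpr (Finset.le_max' _ j (by simp [hne])))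
  -- key coordinate gaps
  have hkey1 : 1 ≤ va (a j0) - vb (a j0) := by
    rw [hca, hcb]
    exact tri_key a b j0 hgt (Ne.symm hj0)
  have hkey2 : 1 ≤ vb (b j0) - va (b j0) := by
    rw [hca, hcb]
    exact tri_key b a j0 (fun j hj => (hgt j hj).symm) hj0
  -- nonnegativity of coordinates
  have hbs : 0 ≤ vb (a j0) := by rw [hcb]; exact tri_sum_nonneg b _
  have hbt : 0 ≤ vb (b j0) := by rw [hcb]; exact tri_sum_nonneg b _
  -- main argument
  by_contra hcon
  push_neg at hcon
  set lam := ‖va‖ * ‖vb‖⁻¹ with hlam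
  have hlampos : 0 < lam := by positivity
  have hrw : va - lam • vb = ‖va‖ • ((‖va‖⁻¹ • va) - (‖vb‖⁻¹ • vb)) := by
    rw [smul_sub, smul_inv_smul₀ hNa.ne', smul_smul]
  have hP : (0:ℝ) < (3:ℝ)^k := by positivity
  have hnormlt : ‖va - lam • vb‖ < 1/2 := by
    rw [hrw, norm_smul, Real.norm_eq_abs, abs_of_pos hNa]
    have h1 : ‖va‖ * ‖(‖va‖⁻¹ • va) - (‖vb‖⁻¹ • vb)‖ < ‖va‖ * ((3:ℝ)^k)⁻¹ :=
      mul_lt_mul_of_pos_left hcon hNa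
    have h2 : ‖va‖ * ((3:ℝ)^k)⁻¹ ≤ (((3:ℝ)^k - 1)/2) * ((3:ℝ)^k)⁻¹ :=
      mul_le_mul_of_nonneg_right hNaU (by positivity)
    have h3 : (((3:ℝ)^k - 1)/2) * ((3:ℝ)^k)⁻¹ < 1/2 := by
      have hinv : (0:ℝ) < ((3:ℝ)^k)⁻¹ := by positivity
      have hmul : ((3:ℝ)^k) * ((3:ℝ)^k)⁻¹ = 1 := mul_inv_cancel₀ hP.ne'
      nlinarith
    linarith
  have hcoord : ∀ s : Fin S, |va s - lam * vb s| < 1/2 := by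
    intro s
    have h := tri_coord_le_norm (va - lam • vb) s
    have happ : (va - lam • vb) s = va s - lam * vb s := rfl
    rw [happ] at h
    linarith
  rcases le_total lam 1 with hl | hl
  · have h1 : lam * vb (a j0) ≤ vb (a j0) := by nlinarith
    have h2 := hcoord (a j0)
    rw [abs_lt] at h2
    linarith
  · have h1 : vb (b j0) ≤ lam * vb (b j0) := by nlinarith
    have h2 := hcoord (b j0)
    rw [abs_lt] at h2
    linarith
end

section
/- Softmax deviation from the uniform distribution: let n ≥ 1, a ≥ 0, and z : Fin n → ℝ with 0 ≤ z(i) ≤ 1 for all i. Then for every i, |softsmax entry minus uniform weight| satisfies |softmax(a·z)(i) − 1/n| ≤ (e^a − 1)/n. In particular, both |e^a/((n−1)+e^a) − 1/n| = (n−1)(e^a−1)/(n((n−1)+e^a)) ≤ (e^a−1)/n and |1/((n−1)e^a+1) − 1/n| = (n−1)(e^a−1)/(n((n−1)e^a+1)) ≤ (e^a−1)/n hold. -/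
/-- Softmax: `softmax a i = exp (a i) / Σ_j exp (a j)`. -/
noncomputable def softmax {n : ℕ} (a : Fin n → ℝ) (i : Fin n) : ℝ :=
  Real.exp (a i) / ∑ j : Fin n, Real.exp (a j)

/-- Softmax deviation from the uniform distribution: for `n ≥ 1`, `a ≥ 0`, and
`z : Fin n → ℝ` with `0 ≤ z i ≤ 1`, we have
`|softmax (a • z) i − 1/n| ≤ (e^a − 1)/n`; in particular
`|e^a/((n−1)+e^a) − 1/n| = (n−1)(e^a−1)/(n((n−1)+e^a)) ≤ (e^a−1)/n` and
`|1/((n−1)e^a+1) − 1/n| = (n−1)(e^a−1)/(n((n−1)e^a+1)) ≤ (e^a−1)/n`. -/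
theorem softmax_deviation_from_uniform (n : ℕ) (hn : 1 ≤ n) (a : ℝ) (ha : 0 ≤ a)
    (z : Fin n → ℝ) (hz : ∀ i, 0 ≤ z i ∧ z i ≤ 1) (i : Fin n) :
    |softmax (fun j => a * z j) i - 1 / (n : ℝ)| ≤ (Real.exp a - 1) / n ∧
    (|Real.exp a / (((n : ℝ) - 1) + Real.exp a) - 1 / (n : ℝ)|
        = ((n : ℝ) - 1) * (Real.exp a - 1) / ((n : ℝ) * (((n : ℝ) - 1) + Real.exp a)) ∧
      ((n : ℝ) - 1) * (Real.exp a - 1) / ((n : ℝ) * (((n : ℝ) - 1) + Real.exp a))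
        ≤ (Real.exp a - 1) / n) ∧
    (|1 / (((n : ℝ) - 1) * Real.exp a + 1) - 1 / (n : ℝ)|
        = ((n : ℝ) - 1) * (Real.exp a - 1) / ((n : ℝ) * (((n : ℝ) - 1) * Real.exp a + 1)) ∧
      ((n : ℝ) - 1) * (Real.exp a - 1) / ((n : ℝ) * (((n : ℝ) - 1) * Real.exp a + 1))
        ≤ (Real.exp a - 1) / n) := by
  have hN : (1:ℝ) ≤ (n:ℝ) := by exact_mod_cast hn
  have hN0 : (0:ℝ) < (n:ℝ) := by linarith
  have hE : (1:ℝ) ≤ Real.exp a := Real.one_le_exp ha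
  have hE0 : (0:ℝ) < Real.exp a := Real.exp_pos a
  set E := Real.exp a with hEdef
  refine ⟨?_, ⟨?_, ?_⟩, ?_, ?_⟩
  · -- main softmax bound
    set S := ∑ j : Fin n, Real.exp (a * z j) with hS
    have hterm : ∀ j : Fin n, 1 ≤ Real.exp (a * z j) ∧ Real.exp (a * z j) ≤ E := by
      intro j
      constructor
      · exact Real.one_le_exp (mul_nonneg ha (hz j).1)
      · exact Real.exp_le_exp.mpr (by nlinarith [(hz j).1, (hz j).2])
    have hSlb : (n:ℝ) ≤ S := by
      calc (n:ℝ) = ∑ _j : Fin n, (1:ℝ) := by simp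
        _ ≤ S := Finset.sum_le_sum fun j _ => (hterm j).1
    have hSub : S ≤ (n:ℝ) * E := by
      calc S ≤ ∑ _j : Fin n, E := Finset.sum_le_sum fun j _ => (hterm j).2
        _ = (n:ℝ) * E := by simp
    have hS0 : (0:ℝ) < S := lt_of_lt_of_le hN0 hSlb
    have hxub : softmax (fun j => a * z j) i ≤ E / (n:ℝ) := by
      unfold softmax
      exact div_le_div₀ (le_of_lt hE0) (hterm i).2 hN0 hSlb
    have hxlb : 1 / ((n:ℝ) * E) ≤ softmax (fun j => a * z j) i := by
      unfold softmax
      exact div_le_div₀ (by positivity) (hterm i).1 hS0 hSub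
    rw [abs_le]
    constructor
    · have h1 : -((E - 1) / (n:ℝ)) ≤ 1 / ((n:ℝ) * E) - 1 / (n:ℝ) := by
        rw [neg_le, neg_sub, div_sub_div _ _ (ne_of_gt hN0) (by positivity),
          div_le_div_iff₀ (by positivity) hN0]
        nlinarith [mul_nonneg (mul_nonneg hN0.le hN0.le) (sq_nonneg (E - 1))]
      linarith
    · have h2 : E / (n:ℝ) - 1 / (n:ℝ) ≤ (E - 1) / (n:ℝ) := by
        rw [div_sub_div_same]
      linarith
  · -- first equality
    have hD : (0:ℝ) < ((n:ℝ) - 1) + E := by linarith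
    rw [abs_of_nonneg]
    · rw [div_sub_div _ _ (ne_of_gt hD) (ne_of_gt hN0), div_eq_div_iff (by positivity)
        (by positivity)]
      ring
    · rw [sub_nonneg, div_le_div_iff₀ hN0 hD]
      nlinarith
  · -- first inequality
    have hD : (0:ℝ) < ((n:ℝ) - 1) + E := by linarith
    rw [div_le_div_iff₀ (by positivity) hN0]
    nlinarith [mul_nonneg (mul_nonneg (sub_nonneg.mpr hE) hN0.le) hE0.le]
  · -- second equality
    have hD : (0:ℝ) < ((n:ℝ) - 1) * E + 1 := by nlinarith
    rw [abs_sub_comm, abs_of_nonneg]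
    · rw [div_sub_div _ _ (ne_of_gt hN0) (ne_of_gt hD), div_eq_div_iff (by positivity)
        (by positivity)]
      ring
    · rw [sub_nonneg, div_le_div_iff₀ hD hN0]
      nlinarith
  · -- second inequality
    have hD : (0:ℝ) < ((n:ℝ) - 1) * E + 1 := by nlinarith
    rw [div_le_div_iff₀ (by positivity) hN0]
    nlinarith [mul_nonneg (mul_nonneg (sub_nonneg.mpr hE) hN0.le)
      (mul_nonneg (sub_nonneg.mpr hN) (sub_nonneg.mpr hE)),
      mul_nonneg (sub_nonneg.mpr hE) hN0.le]
end

section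
/- Geometric covariance decay under a spectral-gap bound: let S be a finite nonempty type, P : Matrix S S ℝ a row-stochastic matrix, π : S → ℝ a stationary distribution for P, and 0 ≤ λ. Assume that for every g : S → ℝ with Σ_a π(a)·g(a) = 0 one has Σ_a π(a)·(Σ_b P(a,b)·g(b))² ≤ λ² · Σ_a π(a)·g(a)². Let f : S → ℝ, f̄ = Σ_a π(a)·f(a), and f̃ = f − f̄. Then for every k ∈ ℕ, |Σ_{a,b} π(a)·(P^k)(a,b)·f̃(a)·f̃(b)| ≤ λ^k · Σ_a π(a)·f̃(a)². (That is, the covariance of the stationary chain at lag k is bounded by λ^k times the stationary variance of f.) -/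
/-- Geometric covariance decay under a spectral-gap bound: for a row-stochastic
`P` with stationary distribution `π`, if for every π-centered `g` one has
`Σ_a π a (Σ_b P a b · g b)² ≤ λ² Σ_a π a (g a)²`, then for every `k` the lag-`k`
covariance satisfies
`|Σ_{a,b} π a (P^k) a b f̃ a f̃ b| ≤ λ^k · Σ_a π a (f̃ a)²`
where `f̃ = f − Σ_a π a · f a`. -/
theorem covariance_geometric_decay_spectral_gap
    {S : Type*} [Fintype S] [Nonempty S] [DecidableEq S]
    (P : Matrix S S ℝ)
    (hP_nonneg : ∀ a b, 0 ≤ P a b)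
    (hP_row : ∀ a, ∑ b : S, P a b = 1)
    (π : S → ℝ)
    (hπ_nonneg : ∀ a, 0 ≤ π a)
    (hπ_sum : ∑ a : S, π a = 1)
    (hπ_stat : ∀ b, ∑ a : S, π a * P a b = π b)
    (lam : ℝ) (hlam : 0 ≤ lam)
    (hgap : ∀ g : S → ℝ, (∑ a : S, π a * g a = 0) →
      ∑ a : S, π a * (∑ b : S, P a b * g b) ^ 2
        ≤ lam ^ 2 * ∑ a : S, π a * (g a) ^ 2)
    (f : S → ℝ) :
    ∀ k : ℕ,
      |∑ a : S, ∑ b : S, π a * (P ^ k) a b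
          * (f a - ∑ c : S, π c * f c) * (f b - ∑ c : S, π c * f c)|
        ≤ lam ^ k * ∑ a : S, π a * (f a - ∑ c : S, π c * f c) ^ 2 := by
  intro k
  set g : S → ℝ := fun a => f a - ∑ c : S, π c * f c with hg
  -- g is centered
  have hcent : ∑ a : S, π a * g a = 0 := by
    simp only [hg, mul_sub, Finset.sum_sub_distrib, ← Finset.sum_mul, hπ_sum, one_mul,
      sub_self]
  -- iterated stationarity
  have hstat : ∀ n : ℕ, ∀ b, ∑ a : S, π a * (P ^ n) a b = π b := by
    intro n
    induction n with
    | zero => intro b; simp [Matrix.one_apply, Finset.sum_ite_eq, Finset.mem_univ]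
    | succ n ih =>
      intro b
      have : ∀ a, (P ^ (n + 1)) a b = ∑ c : S, (P ^ n) a c * P c b := by
        intro a; rw [pow_succ]; rfl
      have key : ∑ a : S, π a * (P ^ (n + 1)) a b
          = ∑ a : S, ∑ c : S, π a * (P ^ n) a c * P c b := by
        simp_rw [this, Finset.mul_sum, ← mul_assoc]
      rw [key, Finset.sum_comm]
      simp_rw [← Finset.sum_mul, ih]
      exact hπ_stat b
  -- define h n a = (P^n g)(a)
  set h : ℕ → S → ℝ := fun n a => ∑ b : S, (P ^ n) a b * g b with hh
  have hh0 : ∀ a, h 0 a = g a := by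
    intro a; simp [hh, Matrix.one_apply, Finset.sum_ite_eq, Finset.mem_univ]
  have hhsucc : ∀ n a, h (n + 1) a = ∑ c : S, P a c * h n c := by
    intro n a
    have : ∀ b, (P ^ (n + 1)) a b = ∑ c : S, P a c * (P ^ n) c b := by
      intro b; rw [pow_succ']; rfl
    simp_rw [hh, this, Finset.sum_mul]
    rw [Finset.sum_comm]
    simp [Finset.mul_sum, mul_assoc]
  -- h n is centered
  have hhcent : ∀ n, ∑ a : S, π a * h n a = 0 := by
    intro n
    simp_rw [hh, Finset.mul_sum]
    rw [Finset.sum_comm]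
    simp_rw [← mul_assoc, ← Finset.sum_mul, hstat]
    exact hcent
  -- L2 decay
  have hL2 : ∀ n, ∑ a : S, π a * (h n a) ^ 2 ≤ (lam ^ 2) ^ n * ∑ a : S, π a * (g a) ^ 2 := by
    intro n
    induction n with
    | zero => simp [hh0]
    | succ n ih =>
      calc ∑ a : S, π a * (h (n + 1) a) ^ 2
          = ∑ a : S, π a * (∑ c : S, P a c * h n c) ^ 2 := by simp_rw [hhsucc]
        _ ≤ lam ^ 2 * ∑ a : S, π a * (h n a) ^ 2 := hgap (h n) (hhcent n)
        _ ≤ lam ^ 2 * ((lam ^ 2) ^ n * ∑ a : S, π a * (g a) ^ 2) := by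
            exact mul_le_mul_of_nonneg_left ih (sq_nonneg lam)
        _ = (lam ^ 2) ^ (n + 1) * ∑ a : S, π a * (g a) ^ 2 := by ring
  -- rewrite covariance
  have hcov : ∑ a : S, ∑ b : S, π a * (P ^ k) a b * g a * g b
      = ∑ a : S, π a * g a * h k a := by
    simp_rw [hh, Finset.mul_sum]
    congr 1; ext a; congr 1; ext b; ring
  have hVnn : 0 ≤ ∑ a : S, π a * (g a) ^ 2 :=
    Finset.sum_nonneg fun a _ => mul_nonneg (hπ_nonneg a) (sq_nonneg _)
  -- Cauchy-Schwarz
  have hCS : (∑ a : S, π a * g a * h k a) ^ 2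
      ≤ (∑ a : S, π a * (g a) ^ 2) * ∑ a : S, π a * (h k a) ^ 2 := by
    apply Finset.sum_sq_le_sum_mul_sum_of_sq_eq_mul
    · exact fun a _ => mul_nonneg (hπ_nonneg a) (sq_nonneg _)
    · exact fun a _ => mul_nonneg (hπ_nonneg a) (sq_nonneg _)
    · intro a _
      ring
  have hsq : (∑ a : S, ∑ b : S, π a * (P ^ k) a b * g a * g b) ^ 2
      ≤ (lam ^ k * ∑ a : S, π a * (g a) ^ 2) ^ 2 := by
    rw [hcov]
    calc (∑ a : S, π a * g a * h k a) ^ 2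
        ≤ (∑ a : S, π a * (g a) ^ 2) * ∑ a : S, π a * (h k a) ^ 2 := hCS
      _ ≤ (∑ a : S, π a * (g a) ^ 2) * ((lam ^ 2) ^ k * ∑ a : S, π a * (g a) ^ 2) :=
          mul_le_mul_of_nonneg_left (hL2 k) hVnn
      _ = (lam ^ k * ∑ a : S, π a * (g a) ^ 2) ^ 2 := by ring
  have hrhs : 0 ≤ lam ^ k * ∑ a : S, π a * (g a) ^ 2 :=
    mul_nonneg (pow_nonneg hlam k) hVnn
  have habs : |∑ a : S, ∑ b : S, π a * (P ^ k) a b * g a * g b|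
      ≤ lam ^ k * ∑ a : S, π a * (g a) ^ 2 := by
    have := Real.sqrt_le_sqrt hsq
    rwa [Real.sqrt_sq_eq_abs, Real.sqrt_sq hrhs] at this
  exact habs
end
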